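/- arXiv:1303.6336 — 2 statements merged into one kernel-verified Lean document; each statement's English description precedes it below -/
import Mathlib

section
/- For the ZDT1 problem with d = 30 variables, a point x ∈ [0,1]^30 is Pareto optimal if and only if x_i = 0 for all i = 2, ..., 30. -/
/-!
Write `φ_t(g) = g (1 - √(t / g)) = g - √t √g`, so that `f₂ = φ_{f₁}(g)`. For `t ≤ 4`, `φ_t` is
strictly increasing on `g ≥ 1`, and on the box `g ≥ 1` with equality exactly when the tail
`x₂, …, x₃₀` vanishes. Hence `f₂ ≥ 1 - √f₁`, with equality iff the tail vanishes. A point with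
nonzero tail is strictly dominated by the point with the same `x₁` and zero tail; a point with
zero tail lies on the curve `f₂ = 1 - √f₁`, which bounds every `f₂` from below and is strictly
decreasing in `f₁`.
-/

open Real Set Finset

/-- `g(x) = 1 + (9/(30−1))·Σ_{i=2}^{30} x_i` for ZDT1 (0-indexed: sum over `i ≠ 0`). -/
noncomputable def zdt1G (x : Fin 30 → ℝ) : ℝ :=
  1 + (9 / 29) * ∑ i ∈ Finset.univ.erase (0 : Fin 30), x i

/-- `f2(x) = g(x)·(1 − √(x_1/g(x)))` for ZDT1. -/
noncomputable def zdt1F2 (x : Fin 30 → ℝ) : ℝ :=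
  zdt1G x * (1 - Real.sqrt (x 0 / zdt1G x))

noncomputable def zdt1Shape (t g : ℝ) : ℝ := g * (1 - √(t / g))

lemma zdt1Shape_eq (t : ℝ) {g : ℝ} (hg : 0 ≤ g) : zdt1Shape t g = g - √t * √g := by
  rcases hg.eq_or_lt with rfl | hg
  · simp [zdt1Shape]
  rw [zdt1Shape, sqrt_div' t hg.le]
  field_simp
  linear_combination √t * sq_sqrt hg.le

lemma zdt1Shape_one (t : ℝ) : zdt1Shape t 1 = 1 - √t := by
  simp [zdt1Shape]

lemma strictMonoOn_zdt1Shape {t : ℝ} (ht : t ≤ 4) : StrictMonoOn (zdt1Shape t) (Ici 1) := by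
  intro a ha b hb hab
  have ha : (1 : ℝ) ≤ a := ha
  have hb : (1 : ℝ) ≤ b := hb
  rw [zdt1Shape_eq t (by linarith), zdt1Shape_eq t (by linarith)]
  have hsqrt_lt : √a < √b := sqrt_lt_sqrt (by linarith) hab
  have hsqrt_a : 1 ≤ √a := one_le_sqrt.mpr ha
  have hsqrt_t : √t ≤ 2 := sqrt_le_iff.mpr ⟨by norm_num, by linarith⟩
  have hfactor : (b - √t * √b) - (a - √t * √a) = (√b - √a) * (√b + √a - √t) := by
    linear_combination sq_sqrt (show 0 ≤ a by linarith) - sq_sqrt (show 0 ≤ b by linarith)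
  linarith [mul_pos (sub_pos.mpr hsqrt_lt) (show 0 < √b + √a - √t by linarith)]

lemma zdt1F2_eq_zdt1Shape (x : Fin 30 → ℝ) : zdt1F2 x = zdt1Shape (x 0) (zdt1G x) := rfl

lemma one_le_zdt1G {x : Fin 30 → ℝ} (hx : ∀ i, 0 ≤ x i) : 1 ≤ zdt1G x := by
  have : 0 ≤ ∑ i ∈ univ.erase 0, x i := sum_nonneg fun i _ => hx i
  rw [zdt1G]; linarith

lemma zdt1G_eq_one_iff {x : Fin 30 → ℝ} (hx : ∀ i, 0 ≤ x i) :
    zdt1G x = 1 ↔ ∀ i ≠ 0, x i = 0 := by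
  rw [zdt1G, add_eq_left, mul_eq_zero, sum_eq_zero_iff_of_nonneg fun i _ => hx i]
  simp

lemma one_sub_sqrt_le_zdt1F2 {x : Fin 30 → ℝ} (hx : ∀ i, x i ∈ Icc (0 : ℝ) 1) :
    1 - √(x 0) ≤ zdt1F2 x := by
  rw [zdt1F2_eq_zdt1Shape, ← zdt1Shape_one]
  exact (strictMonoOn_zdt1Shape (by linarith [(hx 0).2])).monotoneOn self_mem_Ici
    (one_le_zdt1G fun i => (hx i).1) (one_le_zdt1G fun i => (hx i).1)

lemma zdt1F2_eq_one_sub_sqrt_iff {x : Fin 30 → ℝ} (hx : ∀ i, x i ∈ Icc (0 : ℝ) 1) :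
    zdt1F2 x = 1 - √(x 0) ↔ ∀ i ≠ 0, x i = 0 := by
  rw [← zdt1G_eq_one_iff fun i => (hx i).1, zdt1F2_eq_zdt1Shape, ← zdt1Shape_one]
  exact (strictMonoOn_zdt1Shape (by linarith [(hx 0).2])).injOn.eq_iff
    (one_le_zdt1G fun i => (hx i).1) self_mem_Ici

/-- For ZDT1 with `d = 30`, a point `x ∈ [0,1]^30` is Pareto optimal iff
`x_i = 0` for all `i = 2, ..., 30`. -/
theorem zdt1_pareto_optimal_iff (x : Fin 30 → ℝ)
    (hx : ∀ i, x i ∈ Set.Icc (0 : ℝ) 1) :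
    (¬ ∃ y : Fin 30 → ℝ, (∀ i, y i ∈ Set.Icc (0 : ℝ) 1) ∧
        y 0 ≤ x 0 ∧ zdt1F2 y ≤ zdt1F2 x ∧ (y 0 < x 0 ∨ zdt1F2 y < zdt1F2 x)) ↔
      ∀ i : Fin 30, i ≠ 0 → x i = 0 := by
  constructor
  · intro hopt
    by_contra htail
    set y : Fin 30 → ℝ := Pi.single 0 (x 0)
    have hy : ∀ i, y i ∈ Icc (0 : ℝ) 1 := fun i => by
      rcases eq_or_ne i 0 with rfl | hi
      · simpa [y] using hx 0
      · simp [y, hi]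
    have hy0 : y 0 = x 0 := Pi.single_eq_same _ _
    have hfy : zdt1F2 y = 1 - √(x 0) := by
      rw [(zdt1F2_eq_one_sub_sqrt_iff hy).mpr fun i hi => Pi.single_eq_of_ne hi _, hy0]
    have hfx : zdt1F2 y < zdt1F2 x := by
      rw [hfy]
      exact (one_sub_sqrt_le_zdt1F2 hx).lt_of_ne fun h =>
        htail ((zdt1F2_eq_one_sub_sqrt_iff hx).mp h.symm)
    exact hopt ⟨y, hy, hy0.le, hfx.le, Or.inr hfx⟩
  · rintro htail ⟨y, hy, h0, h2, hstrict⟩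
    have hfx : zdt1F2 x = 1 - √(x 0) := (zdt1F2_eq_one_sub_sqrt_iff hx).mpr htail
    have hfy := one_sub_sqrt_le_zdt1F2 hy
    rcases hstrict with hlt | hlt
    · have : √(y 0) < √(x 0) := sqrt_lt_sqrt (hy 0).1 hlt
      linarith
    · linarith [sqrt_le_sqrt h0]
end

section
/- For the LZ problem in dimension d ≥ 3, every point x with x_1 ∈ [0, 1] and x_j = sin(6π x_1 + jπ/d) for all j = 2, ..., d is Pareto optimal, and its objective vector is (f1(x), f2(x)) = (x_1, 1 − √x_1); hence the Pareto front of the LZ problem is {(t, 1 − √t) : t ∈ [0, 1]}. -/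
/-- The target value `sin(6π x₁ + jπ/d)` of the `j`-th coordinate in the LZ problem. -/
noncomputable def lzTarget (d : ℕ) (x1 : ℝ) (j : ℕ) : ℝ :=
  Real.sin (6 * Real.pi * x1 + (j : ℝ) * Real.pi / (d : ℝ))

/-- `J1`: odd indices among `2, ..., d`. -/
def lzJ1 (d : ℕ) : Finset ℕ := (Finset.Icc 2 d).filter (fun j => Odd j)

/-- `J2`: even indices among `2, ..., d`. -/
def lzJ2 (d : ℕ) : Finset ℕ := (Finset.Icc 2 d).filter (fun j => Even j)

/-- First objective of the LZ problem. -/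
noncomputable def lzF1 (d : ℕ) (x : ℕ → ℝ) : ℝ :=
  x 1 + (2 / ((lzJ1 d).card : ℝ)) * ∑ j ∈ lzJ1 d, (x j - lzTarget d (x 1) j) ^ 2

/-- Second objective of the LZ problem. -/
noncomputable def lzF2 (d : ℕ) (x : ℕ → ℝ) : ℝ :=
  1 - Real.sqrt (x 1) + (2 / ((lzJ2 d).card : ℝ)) * ∑ j ∈ lzJ2 d, (x j - lzTarget d (x 1) j) ^ 2

/-- Feasibility for the LZ problem: `x₁ ∈ [0,1]` and `x_j ∈ [−1,1]` for `j = 2, ..., d`. -/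
def lzFeasible (d : ℕ) (x : ℕ → ℝ) : Prop :=
  x 1 ∈ Set.Icc (0 : ℝ) 1 ∧ ∀ j, 2 ≤ j → j ≤ d → x j ∈ Set.Icc (-1 : ℝ) 1

/-- Pareto optimality for the LZ problem. -/
def lzParetoOptimal (d : ℕ) (x : ℕ → ℝ) : Prop :=
  lzFeasible d x ∧
    ¬ ∃ y : ℕ → ℝ, lzFeasible d y ∧ lzF1 d y ≤ lzF1 d x ∧ lzF2 d y ≤ lzF2 d x ∧
      (lzF1 d y < lzF1 d x ∨ lzF2 d y < lzF2 d x)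

/-!
Both penalty sums are nonnegative and vanish when the coordinates `x_j` sit on their
targets, so every feasible `x` has objective vector componentwise above `(x₁, 1 - √x₁)`, with
equality on the manifold. On the curve `t ↦ (t, 1 - √t)` the first objective increases and the
second strictly decreases, so no feasible point dominates a manifold point; conversely a Pareto
optimal point must already attain the curve value, since the manifold point with the same `x₁`
would otherwise dominate it.
-/

open Finset

def lzOnManifold (d : ℕ) (x : ℕ → ℝ) : Prop :=
  ∀ j, 2 ≤ j → j ≤ d → x j = lzTarget d (x 1) j

noncomputable def lzManifoldPoint (d : ℕ) (t : ℝ) : ℕ → ℝ :=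
  fun j => if j = 1 then t else lzTarget d t j

theorem le_lzF1 (d : ℕ) (x : ℕ → ℝ) : x 1 ≤ lzF1 d x :=
  le_add_of_nonneg_right (by positivity)

theorem le_lzF2 (d : ℕ) (x : ℕ → ℝ) : 1 - √(x 1) ≤ lzF2 d x :=
  le_add_of_nonneg_right (by positivity)

section Manifold

variable {d : ℕ} {x : ℕ → ℝ}

theorem sum_sq_sub_lzTarget_eq_zero (hx : lzOnManifold d x) {s : Finset ℕ}
    (hs : s ⊆ Icc 2 d) : ∑ j ∈ s, (x j - lzTarget d (x 1) j) ^ 2 = 0 :=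
  sum_eq_zero fun j hj => by
    obtain ⟨hj2, hjd⟩ := mem_Icc.mp (hs hj)
    rw [hx j hj2 hjd, sub_self, sq, zero_mul]

theorem lzF1_eq_of_onManifold (hx : lzOnManifold d x) : lzF1 d x = x 1 := by
  rw [lzF1, sum_sq_sub_lzTarget_eq_zero (s := lzJ1 d) hx (filter_subset _ _), mul_zero,
    add_zero]

theorem lzF2_eq_of_onManifold (hx : lzOnManifold d x) : lzF2 d x = 1 - √(x 1) := by
  rw [lzF2, sum_sq_sub_lzTarget_eq_zero (s := lzJ2 d) hx (filter_subset _ _), mul_zero,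
    add_zero]

theorem lzFeasible_of_onManifold (hx1 : x 1 ∈ Set.Icc (0 : ℝ) 1) (hx : lzOnManifold d x) :
    lzFeasible d x :=
  ⟨hx1, fun j hj hjd => hx j hj hjd ▸ ⟨Real.neg_one_le_sin _, Real.sin_le_one _⟩⟩

theorem lzParetoOptimal_of_onManifold (hx1 : x 1 ∈ Set.Icc (0 : ℝ) 1)
    (hx : lzOnManifold d x) : lzParetoOptimal d x := by
  refine ⟨lzFeasible_of_onManifold hx1 hx, ?_⟩
  rintro ⟨y, hy, hF1, hF2, hstrict⟩
  rw [lzF1_eq_of_onManifold hx] at hF1 hstrict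
  rw [lzF2_eq_of_onManifold hx] at hF2 hstrict
  have hyx : y 1 ≤ x 1 := (le_lzF1 d y).trans hF1
  have hxy : x 1 ≤ y 1 := (Real.sqrt_le_sqrt_iff hy.1.1).mp (by linarith [le_lzF2 d y])
  rcases hstrict with hlt | hlt
  · linarith [le_lzF1 d y]
  · rw [← le_antisymm hyx hxy] at hlt
    linarith [le_lzF2 d y]

end Manifold

section ManifoldPoint

variable {d : ℕ} {t : ℝ}

@[simp]
theorem lzManifoldPoint_one : lzManifoldPoint d t 1 = t := if_pos rfl

theorem lzOnManifold_lzManifoldPoint : lzOnManifold d (lzManifoldPoint d t) := by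
  intro j hj _
  rw [lzManifoldPoint_one, lzManifoldPoint, if_neg (by omega)]

theorem lzF1_lzManifoldPoint : lzF1 d (lzManifoldPoint d t) = t := by
  rw [lzF1_eq_of_onManifold lzOnManifold_lzManifoldPoint, lzManifoldPoint_one]

theorem lzF2_lzManifoldPoint : lzF2 d (lzManifoldPoint d t) = 1 - √t := by
  rw [lzF2_eq_of_onManifold lzOnManifold_lzManifoldPoint, lzManifoldPoint_one]

theorem lzParetoOptimal_lzManifoldPoint (ht : t ∈ Set.Icc (0 : ℝ) 1) :
    lzParetoOptimal d (lzManifoldPoint d t) :=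
  lzParetoOptimal_of_onManifold (by rwa [lzManifoldPoint_one]) lzOnManifold_lzManifoldPoint

end ManifoldPoint

theorem lzF_eq_of_lzParetoOptimal {d : ℕ} {x : ℕ → ℝ} (hx : lzParetoOptimal d x) :
    lzF1 d x = x 1 ∧ lzF2 d x = 1 - √(x 1) := by
  by_contra hne
  refine hx.2 ⟨lzManifoldPoint d (x 1), (lzParetoOptimal_lzManifoldPoint hx.1.1).1, ?_⟩
  rw [lzF1_lzManifoldPoint, lzF2_lzManifoldPoint]
  refine ⟨le_lzF1 d x, le_lzF2 d x, ?_⟩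
  rcases not_and_or.mp hne with h | h
  · exact Or.inl ((le_lzF1 d x).lt_of_ne (Ne.symm h))
  · exact Or.inr ((le_lzF2 d x).lt_of_ne (Ne.symm h))

theorem lz_manifold_pareto_and_front_general (d : ℕ) :
    (∀ x : ℕ → ℝ, x 1 ∈ Set.Icc (0 : ℝ) 1 →
      (∀ j, 2 ≤ j → j ≤ d → x j = lzTarget d (x 1) j) →
      lzParetoOptimal d x ∧ lzF1 d x = x 1 ∧ lzF2 d x = 1 - Real.sqrt (x 1)) ∧
    {p : ℝ × ℝ | ∃ x : ℕ → ℝ, lzParetoOptimal d x ∧ p = (lzF1 d x, lzF2 d x)} =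
      {p : ℝ × ℝ | ∃ t ∈ Set.Icc (0 : ℝ) 1, p = (t, 1 - Real.sqrt t)} := by
  refine ⟨fun x hx1 hx => ⟨lzParetoOptimal_of_onManifold hx1 hx,
    lzF1_eq_of_onManifold hx, lzF2_eq_of_onManifold hx⟩, ?_⟩
  ext p
  constructor
  · rintro ⟨x, hx, rfl⟩
    obtain ⟨hF1, hF2⟩ := lzF_eq_of_lzParetoOptimal hx
    exact ⟨x 1, hx.1.1, by rw [hF1, hF2]⟩
  · rintro ⟨t, ht, rfl⟩
    exact ⟨lzManifoldPoint d t, lzParetoOptimal_lzManifoldPoint ht,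
      by rw [lzF1_lzManifoldPoint, lzF2_lzManifoldPoint]⟩

/-- For the LZ problem with `d ≥ 3`, every point with `x₁ ∈ [0,1]` and
`x_j = sin(6π x₁ + jπ/d)` for `j = 2, ..., d` is Pareto optimal with objective
vector `(x₁, 1 − √x₁)`; hence the Pareto front is `{(t, 1 − √t) : t ∈ [0, 1]}`. -/
theorem lz_manifold_pareto_and_front (d : ℕ) (hd : 3 ≤ d) :
    (∀ x : ℕ → ℝ, x 1 ∈ Set.Icc (0 : ℝ) 1 →
      (∀ j, 2 ≤ j → j ≤ d → x j = lzTarget d (x 1) j) →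
      lzParetoOptimal d x ∧ lzF1 d x = x 1 ∧ lzF2 d x = 1 - Real.sqrt (x 1)) ∧
    {p : ℝ × ℝ | ∃ x : ℕ → ℝ, lzParetoOptimal d x ∧ p = (lzF1 d x, lzF2 d x)} =
      {p : ℝ × ℝ | ∃ t ∈ Set.Icc (0 : ℝ) 1, p = (t, 1 - Real.sqrt t)} :=
  lz_manifold_pareto_and_front_general d
end
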